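/- arXiv:2307.11136 — 2 statements merged into one kernel-verified Lean document; each statement's English description precedes it below -/
import Mathlib

section
/- Let G ≤ P_n be a subgroup with i·I ∈ G, S a stabilizer group with ⟨i·I⟩·S = Z(G), and x_1, z_1, …, x_K, z_K ∈ G a gauge-qubit decomposition, i.e., G = S·⟨i·I⟩·⟨x_1, z_1, …, x_K, z_K⟩ with ⟨x_1, …, z_K⟩ isomorphic to ⟨X_1, Z_1, …, X_K, Z_K⟩ ≤ P_K via x_j ↦ X_j, z_j ↦ Z_j. Then the set of non-trivial bare logical operators, namely {p ∈ N(S) : p commutes with x_j and z_j for all j} ∖ G, equals C(G) ∖ G. -/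
open Matrix

noncomputable section

/-- The space of operators on `ι`-many qubits: matrices whose rows and columns are
indexed by bit strings `ι → Fin 2`, with complex entries. -/
abbrev PMat (ι : Type) [Fintype ι] [DecidableEq ι] : Type :=
  Matrix (ι → Fin 2) (ι → Fin 2) ℂ

variable (ι : Type) [Fintype ι] [DecidableEq ι]

lemma fin2_add_one_add_one : ∀ a : Fin 2, a + 1 + 1 = a := by decide

/-- The matrix of the operator `X k`, which flips the `k`-th bit of a basis state. -/
def XMat (k : ι) : PMat ι :=
  Matrix.of fun x y => if y = Function.update x k (x k + 1) then (1 : ℂ) else 0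

/-- The matrix of the operator `Z k`, which multiplies the basis state `x` by `(-1) ^ (x k)`. -/
def ZMat (k : ι) : PMat ι :=
  Matrix.diagonal fun x => (-1 : ℂ) ^ (x k : ℕ)

lemma XMat_mul_self (k : ι) : XMat ι k * XMat ι k = 1 := by
  have hinv : ∀ x : ι → Fin 2,
      Function.update (Function.update x k (x k + 1)) k
        (Function.update x k (x k + 1) k + 1) = x := by
    intro x
    ext j
    rcases eq_or_ne j k with rfl | h
    · simp [fin2_add_one_add_one]
    · simp [Function.update_of_ne h]
  ext x z
  rw [Matrix.mul_apply]
  simp only [XMat, Matrix.of_apply, ite_mul, one_mul, zero_mul]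
  rw [Finset.sum_ite_eq' Finset.univ (Function.update x k (x k + 1))
    (fun y => if z = Function.update y k (y k + 1) then (1 : ℂ) else 0)]
  simp [Matrix.one_apply, fin2_add_one_add_one, Function.update_eq_self, eq_comm]

lemma ZMat_mul_self (k : ι) : ZMat ι k * ZMat ι k = 1 := by
  have h : (fun i : ι → Fin 2 => (-1 : ℂ) ^ (i k : ℕ) * (-1) ^ (i k : ℕ)) = fun _ => 1 := by
    funext x
    rw [← pow_add, ← two_mul, pow_mul, neg_one_sq, one_pow]
  rw [ZMat, Matrix.diagonal_mul_diagonal, h, Matrix.diagonal_one]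

lemma iMat_mul : (Complex.I • (1 : PMat ι)) * ((-Complex.I) • (1 : PMat ι)) = 1 := by
  rw [smul_mul_smul_comm]
  simp [Complex.I_mul_I]

lemma iMat_mul' : ((-Complex.I) • (1 : PMat ι)) * (Complex.I • (1 : PMat ι)) = 1 := by
  rw [smul_mul_smul_comm]
  simp [Complex.I_mul_I]

/-- The scalar `i·I`, as a unit. -/
def iU : (PMat ι)ˣ := ⟨Complex.I • 1, (-Complex.I) • 1, iMat_mul ι, iMat_mul' ι⟩

/-- The operator `X k`, as a unit. -/
def XU (k : ι) : (PMat ι)ˣ := ⟨XMat ι k, XMat ι k, XMat_mul_self ι k, XMat_mul_self ι k⟩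

/-- The operator `Z k`, as a unit. -/
def ZU (k : ι) : (PMat ι)ˣ := ⟨ZMat ι k, ZMat ι k, ZMat_mul_self ι k, ZMat_mul_self ι k⟩

/-- The Pauli group on the qubits indexed by `ι`: the subgroup of invertible operators
generated by `i·I` and the `X k` and `Z k`. -/
def PauliGroup : Subgroup (PMat ι)ˣ :=
  Subgroup.closure ({iU ι} ∪ Set.range (XU ι) ∪ Set.range (ZU ι))

/-- The phase-free "almost Pauli group" `⟨X 1, Z 1, …, X n, Z n⟩`. -/
def PauliGroupNP : Subgroup (PMat ι)ˣ :=
  Subgroup.closure (Set.range (XU ι) ∪ Set.range (ZU ι))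

lemma iU_mem : iU ι ∈ PauliGroup ι :=
  Subgroup.subset_closure (Or.inl (Or.inl rfl))

lemma XU_mem (k : ι) : XU ι k ∈ PauliGroup ι :=
  Subgroup.subset_closure (Or.inl (Or.inr ⟨k, rfl⟩))

lemma ZU_mem (k : ι) : ZU ι k ∈ PauliGroup ι :=
  Subgroup.subset_closure (Or.inr ⟨k, rfl⟩)

lemma XU_memNP (k : ι) : XU ι k ∈ PauliGroupNP ι :=
  Subgroup.subset_closure (Or.inl ⟨k, rfl⟩)

lemma ZU_memNP (k : ι) : ZU ι k ∈ PauliGroupNP ι :=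
  Subgroup.subset_closure (Or.inr ⟨k, rfl⟩)

/-- A stabilizer group: a subgroup of the Pauli group not containing `-I`. -/
structure IsStabilizer (S : Subgroup (PMat ι)ˣ) : Prop where
  le : S ≤ PauliGroup ι
  neg_one_notMem : (-1 : (PMat ι)ˣ) ∉ S

/-- A subgroup has rank `r` if it admits a generating set of size `r` and no smaller one. -/
def HasRank {G : Type*} [Group G] (S : Subgroup G) (r : ℕ) : Prop :=
  (∃ T : Finset G, Subgroup.closure (T : Set G) = S ∧ T.card = r) ∧
    ∀ T : Finset G, Subgroup.closure (T : Set G) = S → r ≤ T.card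

/-- The normalizer `N(S) = {p ∈ P_n : p S p⁻¹ = S}` of `S` in the Pauli group. -/
def NormIn (S : Subgroup (PMat ι)ˣ) : Subgroup (PMat ι)ˣ :=
  Subgroup.normalizer (S : Set (PMat ι)ˣ) ⊓ PauliGroup ι

/-- The centralizer `C(S) = {p ∈ P_n : ∀ s ∈ S, p s = s p}` of `S` in the Pauli group. -/
def CentIn (S : Subgroup (PMat ι)ˣ) : Subgroup (PMat ι)ˣ :=
  Subgroup.centralizer (S : Set (PMat ι)ˣ) ⊓ PauliGroup ι

instance normIn_normal (S : Subgroup (PMat ι)ˣ) : (S.subgroupOf (NormIn ι S)).Normal := by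
  constructor
  intro x hx g
  rw [Subgroup.mem_subgroupOf] at hx ⊢
  have hg : (g : (PMat ι)ˣ) ∈ Subgroup.normalizer (S : Set (PMat ι)ˣ) := (Subgroup.mem_inf.mp g.2).1
  have h := (Subgroup.mem_normalizer_iff.mp hg (x : (PMat ι)ˣ)).mp hx
  simpa using h

/-- The logical Pauli group `N(S)/S`. -/
abbrev LogicalGroup (S : Subgroup (PMat ι)ˣ) :=
  ↥(NormIn ι S) ⧸ S.subgroupOf (NormIn ι S)

/-- A Pauli is Hermitian if its matrix equals its conjugate transpose. -/
def IsHermitianPauli (p : (PMat ι)ˣ) : Prop := (p : PMat ι).IsHermitian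

/-- The weight of a Pauli: the number of qubits on which it acts non-trivially,
i.e. on which it fails to commute with `X k` or with `Z k`. -/
def weight (p : (PMat ι)ˣ) : ℕ :=
  Nat.card {k : ι // ¬(Commute p (XU ι k) ∧ Commute p (ZU ι k))}

/-- The effect on a stabilizer group of measuring the Hermitian Pauli `p`,
post-selecting the outcome `+1`: `S ↦ ⟨p⟩·(S ∩ C(p))`. -/
def measUpdate (p : (PMat ι)ˣ) (S : Subgroup (PMat ι)ˣ) : Subgroup (PMat ι)ˣ :=
  Subgroup.closure {p} ⊔ (S ⊓ Subgroup.centralizer {p})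

lemma iU_central (A : (PMat ι)ˣ) : iU ι * A = A * iU ι := by
  apply Units.ext
  show (Complex.I • (1 : PMat ι)) * (A : PMat ι) = (A : PMat ι) * (Complex.I • 1)
  rw [smul_mul_assoc, one_mul, mul_smul_comm, mul_one]

lemma iU_mem_normIn (S : Subgroup (PMat ι)ˣ) : iU ι ∈ NormIn ι S := by
  refine Subgroup.mem_inf.mpr ⟨?_, iU_mem ι⟩
  rw [Subgroup.mem_normalizer_iff]
  intro h
  have : iU ι * h * (iU ι)⁻¹ = h := by
    rw [iU_central ι h, mul_assoc, mul_inv_cancel, mul_one]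
  rw [this]



section AuxPauli

lemma update_invol (x : ι → Fin 2) (k : ι) :
    Function.update (Function.update x k (x k + 1)) k
      (Function.update x k (x k + 1) k + 1) = x := by
  ext j
  rcases eq_or_ne j k with rfl | h
  · simp [fin2_add_one_add_one]
  · simp [Function.update_of_ne h]

lemma eq_update_iff' (k : ι) (x z : ι → Fin 2) :
    z = Function.update x k (x k + 1) ↔ x = Function.update z k (z k + 1) := by
  constructor <;> rintro rfl <;> exact (update_invol ι _ k).symm

lemma XMat_mul_apply (k : ι) (M : PMat ι) (x z : ι → Fin 2) :
    (XMat ι k * M) x z = M (Function.update x k (x k + 1)) z := by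
  rw [Matrix.mul_apply]
  simp only [XMat, Matrix.of_apply, ite_mul, one_mul, zero_mul]
  rw [Finset.sum_ite_eq' Finset.univ (Function.update x k (x k + 1)) (fun y => M y z)]
  simp

lemma mul_XMat_apply (k : ι) (M : PMat ι) (x z : ι → Fin 2) :
    (M * XMat ι k) x z = M x (Function.update z k (z k + 1)) := by
  rw [Matrix.mul_apply]
  simp only [XMat, Matrix.of_apply, mul_ite, mul_one, mul_zero]
  have : ∀ y : ι → Fin 2, (if z = Function.update y k (y k + 1) then M x y else 0)
      = if y = Function.update z k (z k + 1) then M x y else 0 := by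
    intro y
    congr 1
    rw [eq_update_iff' ι k, eq_comm]
  rw [Finset.sum_congr rfl fun y _ => this y,
    Finset.sum_ite_eq' Finset.univ (Function.update z k (z k + 1)) (fun y => M x y)]
  simp

lemma XX_comm (k l : ι) : XMat ι k * XMat ι l = XMat ι l * XMat ι k := by
  rcases eq_or_ne k l with rfl | h
  · rfl
  ext x z
  rw [XMat_mul_apply, XMat_mul_apply]
  simp only [XMat, Matrix.of_apply]
  have : Function.update (Function.update x k (x k + 1)) l
        (Function.update x k (x k + 1) l + 1)
      = Function.update (Function.update x l (x l + 1)) k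
        (Function.update x l (x l + 1) k + 1) := by
    rw [Function.update_of_ne h.symm, Function.update_of_ne h, Function.update_comm h]
  rw [this]

lemma ZZ_comm (k l : ι) : ZMat ι k * ZMat ι l = ZMat ι l * ZMat ι k := by
  rw [ZMat, ZMat, Matrix.diagonal_mul_diagonal, Matrix.diagonal_mul_diagonal]
  have : (fun i : ι → Fin 2 => (-1 : ℂ) ^ (i k : ℕ) * (-1) ^ (i l : ℕ))
      = fun i => (-1 : ℂ) ^ (i l : ℕ) * (-1) ^ (i k : ℕ) := by
    funext i; ring
  rw [this]

lemma XZ_comm (k l : ι) (h : k ≠ l) : XMat ι k * ZMat ι l = ZMat ι l * XMat ι k := by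
  ext x z
  rw [ZMat, Matrix.mul_diagonal, Matrix.diagonal_mul, XMat]
  simp only [Matrix.of_apply]
  rcases eq_or_ne z (Function.update x k (x k + 1)) with rfl | hz
  · simp [Function.update_of_ne (Ne.symm h)]
  · simp [hz]

lemma XZ_anticomm (k : ι) : XMat ι k * ZMat ι k = -(ZMat ι k * XMat ι k) := by
  ext x z
  rw [Matrix.neg_apply, ZMat, Matrix.mul_diagonal, Matrix.diagonal_mul, XMat]
  simp only [Matrix.of_apply]
  rcases eq_or_ne z (Function.update x k (x k + 1)) with rfl | hz
  · have : ∀ a : Fin 2, ((-1 : ℂ)) ^ (((a + 1) : Fin 2) : ℕ) = -(-1 : ℂ) ^ (a : ℕ) := by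
      intro a; fin_cases a <;> simp
    simp [this]
  · simp [hz]

end AuxPauli

lemma gen_rel : ∀ s ∈ ({iU ι} ∪ Set.range (XU ι) ∪ Set.range (ZU ι) : Set (PMat ι)ˣ),
    ∀ t ∈ ({iU ι} ∪ Set.range (XU ι) ∪ Set.range (ZU ι) : Set (PMat ι)ˣ),
    s * t = t * s ∨ s * t = -(t * s) := by
  rintro s hs t ht
  rcases hs with (rfl | ⟨k, rfl⟩) | ⟨k, rfl⟩
  · exact Or.inl (iU_central ι t)
  all_goals rcases ht with (rfl | ⟨l, rfl⟩) | ⟨l, rfl⟩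
  · exact Or.inl (iU_central ι _).symm
  · exact Or.inl (Units.ext (XX_comm ι k l))
  · rcases eq_or_ne k l with rfl | h
    · refine Or.inr (Units.ext ?_)
      rw [Units.val_mul, Units.val_neg, Units.val_mul]
      exact XZ_anticomm ι k
    · exact Or.inl (Units.ext (XZ_comm ι k l h))
  · exact Or.inl (iU_central ι _).symm
  · rcases eq_or_ne l k with rfl | h
    · refine Or.inr (Units.ext ?_)
      rw [Units.val_mul, Units.val_neg, Units.val_mul]
      show ZMat ι l * XMat ι l = -(XMat ι l * ZMat ι l)
      rw [XZ_anticomm, neg_neg]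
    · exact Or.inl (Units.ext (XZ_comm ι l k h).symm)
  · exact Or.inl (Units.ext (ZZ_comm ι k l))

lemma pauli_comm_or {g h : (PMat ι)ˣ} (hg : g ∈ PauliGroup ι) (hh : h ∈ PauliGroup ι) :
    g * h = h * g ∨ g * h = -(h * g) := by
  rw [PauliGroup] at hg hh
  induction hg, hh using Subgroup.closure_induction₂ with
  | mem s t hs ht => exact gen_rel ι s hs t ht
  | one_left t _ => simp
  | one_right t _ => simp
  | mul_left x y z hx hy hz Px Py =>
    rcases Px with Px | Px <;> rcases Py with Py | Py
    · left; rw [mul_assoc, Py, ← mul_assoc, Px, mul_assoc]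
    · right; rw [mul_assoc, Py, mul_neg, ← mul_assoc, Px, mul_assoc]
    · right; rw [mul_assoc, Py, ← mul_assoc, Px, neg_mul, mul_assoc]
    · left; rw [mul_assoc, Py, mul_neg, ← mul_assoc, Px, neg_mul, neg_neg, mul_assoc]
  | mul_right y z x hy hz hx Py Pz =>
    rcases Py with Py | Py <;> rcases Pz with Pz | Pz
    · left; rw [← mul_assoc, Py, mul_assoc, Pz, ← mul_assoc]
    · right; rw [← mul_assoc, Py, mul_assoc, Pz, mul_neg, ← mul_assoc]
    · right; rw [← mul_assoc, Py, neg_mul, mul_assoc, Pz, ← mul_assoc]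
    · left; rw [← mul_assoc, Py, neg_mul, mul_assoc, Pz, mul_neg, neg_neg, ← mul_assoc]
  | inv_left x y hx hy Px =>
    rcases Px with Px | Px
    · exact Or.inl (Commute.inv_left Px)
    · right
      have h2 : x⁻¹ * (x * y) * x⁻¹ = x⁻¹ * (-(y * x)) * x⁻¹ := by rw [Px]
      have e1 : x⁻¹ * (x * y) * x⁻¹ = y * x⁻¹ := by group
      have e2 : x⁻¹ * (y * x) * x⁻¹ = x⁻¹ * y := by group
      rw [e1, mul_neg, neg_mul, e2] at h2
      rw [h2, neg_neg]
  | inv_right x y hx hy Px =>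
    rcases Px with Px | Px
    · exact Or.inl (Commute.inv_right Px)
    · right
      have h2 : y⁻¹ * (x * y) * y⁻¹ = y⁻¹ * (-(y * x)) * y⁻¹ := by rw [Px]
      have e1 : y⁻¹ * (x * y) * y⁻¹ = y⁻¹ * x := by group
      have e2 : y⁻¹ * (y * x) * y⁻¹ = x * y⁻¹ := by group
      rw [e1, mul_neg, neg_mul, e2] at h2
      rw [h2, neg_neg]

/-- The set of non-trivial bare logical operators of a subsystem code equals `C(G) \ G`:
logical operators (elements of `N(S)`) commuting with all gauge-qubit operators `x j, z j`,
excluding elements of `G`, are exactly the elements of the centralizer of `G` in the Pauli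
group which are not in `G`. -/
theorem bare_logicals_eq_centralizer_sdiff (n : ℕ) (G S : Subgroup (PMat (Fin n))ˣ)
    (hGP : G ≤ PauliGroup (Fin n)) (hiG : iU (Fin n) ∈ G)
    (hS : IsStabilizer (Fin n) S)
    (hZ : Subgroup.closure {iU (Fin n)} ⊔ S =
      Subgroup.centralizer (G : Set (PMat (Fin n))ˣ) ⊓ G)
    (K : ℕ) (x z : Fin K → (PMat (Fin n))ˣ)
    (hxG : ∀ j, x j ∈ G) (hzG : ∀ j, z j ∈ G)
    (hdecomp : G = S ⊔ Subgroup.closure {iU (Fin n)} ⊔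
      Subgroup.closure (Set.range x ∪ Set.range z))
    (φ : ↥(Subgroup.closure (Set.range x ∪ Set.range z)) ≃* ↥(PauliGroupNP (Fin K)))
    (hφx : ∀ j, φ ⟨x j, Subgroup.subset_closure (Or.inl ⟨j, rfl⟩)⟩ =
      ⟨XU (Fin K) j, XU_memNP (Fin K) j⟩)
    (hφz : ∀ j, φ ⟨z j, Subgroup.subset_closure (Or.inr ⟨j, rfl⟩)⟩ =
      ⟨ZU (Fin K) j, ZU_memNP (Fin K) j⟩) :
    {p : (PMat (Fin n))ˣ | p ∈ NormIn (Fin n) S ∧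
        ∀ j, Commute p (x j) ∧ Commute p (z j)} \ (G : Set (PMat (Fin n))ˣ) =
      ((Subgroup.centralizer (G : Set (PMat (Fin n))ˣ) ⊓ PauliGroup (Fin n) :
        Subgroup (PMat (Fin n))ˣ) : Set (PMat (Fin n))ˣ) \ (G : Set (PMat (Fin n))ˣ) := by
  have hSG : S ≤ G := by
    rw [hdecomp]; exact le_trans le_sup_left le_sup_left
  ext p
  simp only [Set.mem_diff, Set.mem_setOf_eq, SetLike.mem_coe, Subgroup.mem_inf]
  constructor
  · rintro ⟨⟨hpN, hcomm⟩, hpG⟩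
    obtain ⟨hpNorm, hpP⟩ := Subgroup.mem_inf.mp hpN
    refine ⟨⟨?_, hpP⟩, hpG⟩
    have hGle : G ≤ Subgroup.centralizer {p} := by
      rw [hdecomp]
      refine sup_le (sup_le ?_ ?_) ?_
      · intro s hs
        rw [Subgroup.mem_centralizer_iff]
        rintro q hq
        rw [show q = p from hq]
        rcases pauli_comm_or (Fin n) hpP (hS.le hs) with hco | han
        · exact hco
        · exfalso
          have hmem : p * s * p⁻¹ ∈ S := (Subgroup.mem_normalizer_iff.mp hpNorm s).mp hs
          have e : p * s * p⁻¹ = -s := by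
            rw [han, neg_mul, mul_assoc, mul_inv_cancel, mul_one]
          rw [e] at hmem
          have : (-1 : (PMat (Fin n))ˣ) ∈ S := by
            have := S.mul_mem hmem (S.inv_mem hs)
            rwa [neg_mul, mul_inv_cancel] at this
          exact hS.neg_one_notMem this
      · rw [Subgroup.closure_le]
        rintro q rfl
        rw [SetLike.mem_coe, Subgroup.mem_centralizer_iff]
        rintro q hq
        rw [show q = p from hq]
        exact (iU_central (Fin n) p).symm
      · rw [Subgroup.closure_le]
        rintro q (⟨j, rfl⟩ | ⟨j, rfl⟩) <;>
          · rw [SetLike.mem_coe, Subgroup.mem_centralizer_iff]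
            rintro q hq
            rw [show q = p from hq]
            first
              | exact (hcomm j).1
              | exact (hcomm j).2
    rw [Subgroup.mem_centralizer_iff]
    intro g hg
    exact (Subgroup.mem_centralizer_iff.mp (hGle hg) p rfl).symm
  · rintro ⟨⟨hc, hpP⟩, hpG⟩
    refine ⟨⟨Subgroup.mem_inf.mpr ⟨?_, hpP⟩, fun j => ⟨?_, ?_⟩⟩, hpG⟩
    · rw [Subgroup.mem_normalizer_iff]
      intro h
      constructor
      · intro hh
        have hcom := Subgroup.mem_centralizer_iff.mp hc h (hSG hh)
        have e : p * h * p⁻¹ = h := by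
          rw [← hcom, mul_assoc, mul_inv_cancel, mul_one]
        rw [e]; exact hh
      · intro hh
        have hcom := Subgroup.mem_centralizer_iff.mp hc _ (hSG hh)
        have e1 : (p * h * p⁻¹) * p = p * h := by group
        rw [e1] at hcom
        have := mul_left_cancel hcom
        rw [this]; exact hh
    · exact (Subgroup.mem_centralizer_iff.mp hc _ (hxG j)).symm
    · exact (Subgroup.mem_centralizer_iff.mp hc _ (hzG j)).symm


end
end

section
/- In the distance-two Bacon-Shor schedule in P_4 (post-selected outcomes +1), for every even t ≥ 2 the intermediate stabilizer group ⟨X₁X₂⟩·(S_{t−1} ∩ C(X₁X₂)) obtained after measuring X₁X₂ at timestep t already contains X₃X₄, so the subsequent measurement of X₃X₄ at timestep t has deterministic outcome (it falls into Case 2 of the stabilizer formalism); analogously, for every odd t ≥ 3 the group ⟨Z₁Z₃⟩·(S_{t−1} ∩ C(Z₁Z₃)) contains Z₂Z₄. Consequently the code has detectors m_{X₁X₂}^{(t)} m_{X₃X₄}^{(t)} m_{X₁X₂}^{(t−2)} m_{X₃X₄}^{(t−2)} at every even t ≥ 2 and m_{Z₁Z₃}^{(t)} m_{Z₂Z₄}^{(t)}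 m_{Z₁Z₃}^{(t−2)} m_{Z₂Z₄}^{(t−2)} at every odd t ≥ 3. -/
open Matrix

noncomputable section

variable (ι : Type) [Fintype ι] [DecidableEq ι]

/-- The operator `X₁X₂` on four qubits. -/
def XX12 : (PMat (Fin 4))ˣ := XU (Fin 4) 0 * XU (Fin 4) 1
/-- The operator `X₃X₄` on four qubits. -/
def XX34 : (PMat (Fin 4))ˣ := XU (Fin 4) 2 * XU (Fin 4) 3
/-- The operator `Z₁Z₃` on four qubits. -/
def ZZ13 : (PMat (Fin 4))ˣ := ZU (Fin 4) 0 * ZU (Fin 4) 2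
/-- The operator `Z₂Z₄` on four qubits. -/
def ZZ24 : (PMat (Fin 4))ˣ := ZU (Fin 4) 1 * ZU (Fin 4) 3

/-- One even timestep of the distance-two Bacon-Shor schedule: measure `X₁X₂`, then `X₃X₄`. -/
def bsStepX (S : Subgroup (PMat (Fin 4))ˣ) : Subgroup (PMat (Fin 4))ˣ :=
  measUpdate (Fin 4) XX34 (measUpdate (Fin 4) XX12 S)

/-- One odd timestep of the distance-two Bacon-Shor schedule: measure `Z₁Z₃`, then `Z₂Z₄`. -/
def bsStepZ (S : Subgroup (PMat (Fin 4))ˣ) : Subgroup (PMat (Fin 4))ˣ :=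
  measUpdate (Fin 4) ZZ24 (measUpdate (Fin 4) ZZ13 S)

/-- The instantaneous stabilizer groups of the distance-two Bacon-Shor schedule, with
`S_{-1} = {I}` the trivial group (here `bsISG t` is `S_t` for `t ≥ 0`). -/
def bsISG : ℕ → Subgroup (PMat (Fin 4))ˣ
  | 0 => bsStepX ⊥
  | t + 1 => if (t + 1) % 2 = 0 then bsStepX (bsISG t) else bsStepZ (bsISG t)

/-! ### Auxiliary machinery for the detector theorem -/

/-- Permutation-style matrices: a single 1 in each row, at position `f x`. -/
def permMat' (f : (ι → Fin 2) → (ι → Fin 2)) : PMat ι :=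
  Matrix.of fun x y => if y = f x then (1 : ℂ) else 0

/-- Flipping the `k`-th bit. -/
def flipAt' (k : ι) (x : ι → Fin 2) : ι → Fin 2 := Function.update x k (x k + 1)

lemma XMat_eq_permMat' (k : ι) : XMat ι k = permMat' ι (flipAt' ι k) := rfl

lemma permMat'_mul (f g : (ι → Fin 2) → (ι → Fin 2)) :
    permMat' ι f * permMat' ι g = permMat' ι (g ∘ f) := by
  ext x y
  rw [Matrix.mul_apply]
  simp only [permMat', Matrix.of_apply, ite_mul, one_mul, zero_mul]
  rw [Finset.sum_ite_eq' Finset.univ (f x) (fun z => if y = g z then (1 : ℂ) else 0)]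
  simp [Function.comp]

lemma permMat'_comm_diagonal (f : (ι → Fin 2) → (ι → Fin 2)) (d : (ι → Fin 2) → ℂ)
    (h : ∀ x, d (f x) = d x) :
    permMat' ι f * Matrix.diagonal d = Matrix.diagonal d * permMat' ι f := by
  ext x y
  rw [Matrix.mul_diagonal, Matrix.diagonal_mul]
  simp only [permMat', Matrix.of_apply]
  by_cases hy : y = f x
  · subst hy; simp [h x]
  · simp [hy]

lemma commute_of_val {a b : (PMat ι)ˣ} (h : (a : PMat ι) * (b : PMat ι) = (b : PMat ι) * a) :
    Commute a b :=
  Units.ext (by simpa using h)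

lemma flipAt'_apply (k j : ι) (x : ι → Fin 2) :
    flipAt' ι k x j = if j = k then x k + 1 else x j := by
  simp [flipAt', Function.update_apply]

lemma neg_one_pow_fin2_succ (a : Fin 2) :
    ((-1 : ℂ)) ^ ((a + 1 : Fin 2) : ℕ) = -((-1 : ℂ)) ^ (a : ℕ) := by
  fin_cases a <;> norm_num [show ((1 : Fin 2) + 1) = 0 from rfl]

/-- The flip on qubits 1 and 2 of four. -/
def flip12 : (Fin 4 → Fin 2) → (Fin 4 → Fin 2) := flipAt' (Fin 4) 1 ∘ flipAt' (Fin 4) 0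

/-- The flip on qubits 3 and 4 of four. -/
def flip34 : (Fin 4 → Fin 2) → (Fin 4 → Fin 2) := flipAt' (Fin 4) 3 ∘ flipAt' (Fin 4) 2

lemma XX12_val : ((XX12 : (PMat (Fin 4))ˣ) : PMat (Fin 4)) = permMat' (Fin 4) flip12 := by
  show XMat (Fin 4) 0 * XMat (Fin 4) 1 = _
  rw [XMat_eq_permMat', XMat_eq_permMat', permMat'_mul]
  rfl

lemma XX34_val : ((XX34 : (PMat (Fin 4))ˣ) : PMat (Fin 4)) = permMat' (Fin 4) flip34 := by
  show XMat (Fin 4) 2 * XMat (Fin 4) 3 = _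
  rw [XMat_eq_permMat', XMat_eq_permMat', permMat'_mul]
  rfl

/-- The diagonal entries of `Z₁Z₃`. -/
def d13 (x : Fin 4 → Fin 2) : ℂ := (-1 : ℂ) ^ (x 0 : ℕ) * (-1 : ℂ) ^ (x 2 : ℕ)

/-- The diagonal entries of `Z₂Z₄`. -/
def d24 (x : Fin 4 → Fin 2) : ℂ := (-1 : ℂ) ^ (x 1 : ℕ) * (-1 : ℂ) ^ (x 3 : ℕ)

lemma ZZ13_val : ((ZZ13 : (PMat (Fin 4))ˣ) : PMat (Fin 4)) = Matrix.diagonal d13 := by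
  show ZMat (Fin 4) 0 * ZMat (Fin 4) 2 = _
  rw [ZMat, ZMat, Matrix.diagonal_mul_diagonal]
  rfl

lemma ZZ24_val : ((ZZ24 : (PMat (Fin 4))ˣ) : PMat (Fin 4)) = Matrix.diagonal d24 := by
  show ZMat (Fin 4) 1 * ZMat (Fin 4) 3 = _
  rw [ZMat, ZMat, Matrix.diagonal_mul_diagonal]
  rfl

lemma flip12_0 (x : Fin 4 → Fin 2) : flip12 x 0 = x 0 + 1 := by
  simp [flip12, flipAt', Function.update_apply]
lemma flip12_1 (x : Fin 4 → Fin 2) : flip12 x 1 = x 1 + 1 := by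
  simp [flip12, flipAt', Function.update_apply]
lemma flip12_2 (x : Fin 4 → Fin 2) : flip12 x 2 = x 2 := by
  simp [flip12, flipAt', Function.update_apply]
lemma flip12_3 (x : Fin 4 → Fin 2) : flip12 x 3 = x 3 := by
  simp [flip12, flipAt', Function.update_apply]
lemma flip34_0 (x : Fin 4 → Fin 2) : flip34 x 0 = x 0 := by
  simp [flip34, flipAt', Function.update_apply]
lemma flip34_1 (x : Fin 4 → Fin 2) : flip34 x 1 = x 1 := by
  simp [flip34, flipAt', Function.update_apply]
lemma flip34_2 (x : Fin 4 → Fin 2) : flip34 x 2 = x 2 + 1 := by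
  simp [flip34, flipAt', Function.update_apply]
lemma flip34_3 (x : Fin 4 → Fin 2) : flip34 x 3 = x 3 + 1 := by
  simp [flip34, flipAt', Function.update_apply]

lemma flip_comm : flip34 ∘ flip12 = flip12 ∘ flip34 := by
  funext x
  funext j
  fin_cases j <;>
    simp [Function.comp_apply, flip12_0, flip12_1, flip12_2, flip12_3,
      flip34_0, flip34_1, flip34_2, flip34_3]

lemma commute_XX12_XX34 : Commute XX12 XX34 := by
  apply commute_of_val
  rw [XX12_val, XX34_val, permMat'_mul, permMat'_mul, flip_comm]

lemma commute_ZZ13_ZZ24 : Commute ZZ13 ZZ24 := by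
  apply commute_of_val
  rw [ZZ13_val, ZZ24_val, Matrix.diagonal_mul_diagonal, Matrix.diagonal_mul_diagonal,
    show (fun i => d13 i * d24 i) = fun i => d24 i * d13 i from
      funext fun i => mul_comm _ _]

lemma d13_flip12 (x : Fin 4 → Fin 2) : d13 (flip12 x) = -d13 x := by
  simp only [d13, flip12_0, flip12_2, neg_one_pow_fin2_succ]
  ring

lemma d13_flip34 (x : Fin 4 → Fin 2) : d13 (flip34 x) = -d13 x := by
  simp only [d13, flip34_0, flip34_2, neg_one_pow_fin2_succ]
  ring

lemma d24_flip12 (x : Fin 4 → Fin 2) : d24 (flip12 x) = -d24 x := by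
  simp only [d24, flip12_1, flip12_3, neg_one_pow_fin2_succ]
  ring

lemma d24_flip34 (x : Fin 4 → Fin 2) : d24 (flip34 x) = -d24 x := by
  simp only [d24, flip34_1, flip34_3, neg_one_pow_fin2_succ]
  ring

lemma commute_gX_ZZ13 : Commute (XX12 * XX34) ZZ13 := by
  apply commute_of_val
  have : ((XX12 * XX34 : (PMat (Fin 4))ˣ) : PMat (Fin 4))
      = permMat' (Fin 4) (flip34 ∘ flip12) := by
    show ((XX12 : (PMat (Fin 4))ˣ) : PMat (Fin 4)) * ((XX34 : (PMat (Fin 4))ˣ) : PMat (Fin 4)) = _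
    rw [XX12_val, XX34_val, permMat'_mul]
  rw [this, ZZ13_val]
  apply permMat'_comm_diagonal
  intro x
  simp [Function.comp_apply, d13_flip34, d13_flip12]

lemma commute_gX_ZZ24 : Commute (XX12 * XX34) ZZ24 := by
  apply commute_of_val
  have : ((XX12 * XX34 : (PMat (Fin 4))ˣ) : PMat (Fin 4))
      = permMat' (Fin 4) (flip34 ∘ flip12) := by
    show ((XX12 : (PMat (Fin 4))ˣ) : PMat (Fin 4)) * ((XX34 : (PMat (Fin 4))ˣ) : PMat (Fin 4)) = _
    rw [XX12_val, XX34_val, permMat'_mul]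
  rw [this, ZZ24_val]
  apply permMat'_comm_diagonal
  intro x
  simp [Function.comp_apply, d24_flip34, d24_flip12]

lemma commute_gZ_XX12 : Commute (ZZ13 * ZZ24) XX12 := by
  apply commute_of_val
  have : ((ZZ13 * ZZ24 : (PMat (Fin 4))ˣ) : PMat (Fin 4))
      = Matrix.diagonal (fun x => d13 x * d24 x) := by
    show ((ZZ13 : (PMat (Fin 4))ˣ) : PMat (Fin 4)) * ((ZZ24 : (PMat (Fin 4))ˣ) : PMat (Fin 4)) = _
    rw [ZZ13_val, ZZ24_val, Matrix.diagonal_mul_diagonal]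
  rw [this, XX12_val]
  exact (permMat'_comm_diagonal (Fin 4) flip12 (fun x => d13 x * d24 x)
    (fun x => by simp [Pi.mul_apply, d13_flip12, d24_flip12])).symm

lemma commute_gZ_XX34 : Commute (ZZ13 * ZZ24) XX34 := by
  apply commute_of_val
  have : ((ZZ13 * ZZ24 : (PMat (Fin 4))ˣ) : PMat (Fin 4))
      = Matrix.diagonal (fun x => d13 x * d24 x) := by
    show ((ZZ13 : (PMat (Fin 4))ˣ) : PMat (Fin 4)) * ((ZZ24 : (PMat (Fin 4))ˣ) : PMat (Fin 4)) = _
    rw [ZZ13_val, ZZ24_val, Matrix.diagonal_mul_diagonal]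
  rw [this, XX34_val]
  exact (permMat'_comm_diagonal (Fin 4) flip34 (fun x => d13 x * d24 x)
    (fun x => by simp [Pi.mul_apply, d13_flip34, d24_flip34])).symm

/-- Membership of the measured Pauli itself in the updated group. -/
lemma self_mem_measUpdate (p : (PMat ι)ˣ) (S : Subgroup (PMat ι)ˣ) :
    p ∈ measUpdate ι p S :=
  Subgroup.mem_sup_left (Subgroup.subset_closure rfl)

/-- A commuting element of the old group survives measurement. -/
lemma mem_measUpdate_of_mem (p q : (PMat ι)ˣ) (S : Subgroup (PMat ι)ˣ)
    (hq : q ∈ S) (h : Commute q p) : q ∈ measUpdate ι p S :=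
  Subgroup.mem_sup_right (Subgroup.mem_inf.mpr ⟨hq,
    Subgroup.mem_centralizer_iff.mpr fun g hg => by
      rw [Set.mem_singleton_iff] at hg; subst hg; exact h.symm⟩)

lemma gX_mem_bsISG : ∀ t, XX12 * XX34 ∈ bsISG t := by
  intro t
  induction t with
  | zero =>
      show XX12 * XX34 ∈ bsStepX ⊥
      have h1 : XX12 ∈ measUpdate (Fin 4) XX12 (⊥ : Subgroup (PMat (Fin 4))ˣ) :=
        self_mem_measUpdate _ _ _
      exact mul_mem
        (mem_measUpdate_of_mem _ XX34 XX12 _ h1 commute_XX12_XX34)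
        (self_mem_measUpdate _ _ _)
  | succ t ih =>
      show XX12 * XX34 ∈ if (t + 1) % 2 = 0 then bsStepX (bsISG t) else bsStepZ (bsISG t)
      have hX12 : Commute (XX12 * XX34) XX12 :=
        Commute.mul_left (Commute.refl XX12) commute_XX12_XX34.symm
      have hX34 : Commute (XX12 * XX34) XX34 :=
        Commute.mul_left commute_XX12_XX34 (Commute.refl XX34)
      split
      · exact mem_measUpdate_of_mem _ XX34 _ _
          (mem_measUpdate_of_mem _ XX12 _ _ ih hX12) hX34
      · exact mem_measUpdate_of_mem _ ZZ24 _ _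
          (mem_measUpdate_of_mem _ ZZ13 _ _ ih commute_gX_ZZ13) commute_gX_ZZ24

lemma gZ_mem_bsStepZ (S : Subgroup (PMat (Fin 4))ˣ) : ZZ13 * ZZ24 ∈ bsStepZ S := by
  have h1 : ZZ13 ∈ measUpdate (Fin 4) ZZ13 S := self_mem_measUpdate _ _ _
  exact mul_mem
    (mem_measUpdate_of_mem _ ZZ24 ZZ13 _ h1 commute_ZZ13_ZZ24)
    (self_mem_measUpdate _ _ _)

lemma gZ_mem_bsISG : ∀ t, ZZ13 * ZZ24 ∈ bsISG (t + 1) := by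
  intro t
  induction t with
  | zero =>
      show ZZ13 * ZZ24 ∈ if (0 + 1) % 2 = 0 then bsStepX (bsISG 0) else bsStepZ (bsISG 0)
      rw [if_neg (by norm_num)]
      exact gZ_mem_bsStepZ _
  | succ t ih =>
      show ZZ13 * ZZ24 ∈
        if (t + 1 + 1) % 2 = 0 then bsStepX (bsISG (t + 1)) else bsStepZ (bsISG (t + 1))
      split
      · exact mem_measUpdate_of_mem _ XX34 _ _
          (mem_measUpdate_of_mem _ XX12 _ _ ih commute_gZ_XX12) commute_gZ_XX34
      · exact gZ_mem_bsStepZ _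

/-- Detectors of the distance-two Bacon-Shor code: at every even timestep `t ≥ 2`, after
measuring `X₁X₂` the intermediate stabilizer group already contains `X₃X₄`, so the
subsequent `X₃X₄` measurement has a deterministic outcome (Case 2 of the stabilizer
formalism); analogously at every odd timestep `t ≥ 3` for `Z₁Z₃` and `Z₂Z₄`. -/
theorem baconShor_detectors :
    (∀ t, 2 ≤ t → t % 2 = 0 →
      XX34 ∈ measUpdate (Fin 4) XX12 (bsISG (t - 1))) ∧
    (∀ t, 3 ≤ t → t % 2 = 1 →
      ZZ24 ∈ measUpdate (Fin 4) ZZ13 (bsISG (t - 1))) := by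
  constructor
  · intro t _ _
    have hg : XX12 * XX34 ∈ bsISG (t - 1) := gX_mem_bsISG (t - 1)
    have hcomm : Commute (XX12 * XX34) XX12 :=
      Commute.mul_left (Commute.refl XX12) commute_XX12_XX34.symm
    have h1 : XX12 * XX34 ∈ measUpdate (Fin 4) XX12 (bsISG (t - 1)) :=
      mem_measUpdate_of_mem _ XX12 _ _ hg hcomm
    have h2 : XX12 ∈ measUpdate (Fin 4) XX12 (bsISG (t - 1)) := self_mem_measUpdate _ _ _
    have : XX34 = XX12⁻¹ * (XX12 * XX34) := by rw [inv_mul_cancel_left]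
    rw [this]
    exact mul_mem (inv_mem h2) h1
  · intro t ht _
    have hg : ZZ13 * ZZ24 ∈ bsISG (t - 1) := by
      have := gZ_mem_bsISG (t - 2)
      rwa [show t - 2 + 1 = t - 1 by omega] at this
    have hcomm : Commute (ZZ13 * ZZ24) ZZ13 :=
      Commute.mul_left (Commute.refl ZZ13) commute_ZZ13_ZZ24.symm
    have h1 : ZZ13 * ZZ24 ∈ measUpdate (Fin 4) ZZ13 (bsISG (t - 1)) :=
      mem_measUpdate_of_mem _ ZZ13 _ _ hg hcomm
    have h2 : ZZ13 ∈ measUpdate (Fin 4) ZZ13 (bsISG (t - 1)) := self_mem_measUpdate _ _ _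
    have : ZZ24 = ZZ13⁻¹ * (ZZ13 * ZZ24) := by rw [inv_mul_cancel_left]
    rw [this]
    exact mul_mem (inv_mem h2) h1

end
end
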